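/- For every s, w ∈ V with w ≠ s and d(s,w) < ∞, the number of shortest paths satisfies the predecessor recursion σ_{sw} = Σ_{v ∈ P_s(w)} σ_{sv}. -/

import Mathlib

/-!
A shortest `s`–`w` path with `w ≠ s` ends in an edge `(y, w)`. By the triangle inequality
`d(s,w) ≤ d(s,y) + ω(y,w)` its prefix is a shortest `s`–`y` path, so `y ∈ P_s(w)`. Conversely,
appending `w` to a shortest `s`–`y` path for `y ∈ P_s(w)` gives a shortest `s`–`w` path: `w` does
not occur on it, because positivity of weights gives `d(s,y) < d(s,w)`. Hence the shortest
`s`–`w` paths are the disjoint union, over `y ∈ P_s(w)`, of the shortest `s`–`y` paths extended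
by `w`.
-/

open scoped BigOperators

/-- A directed graph on vertex set `V` with positive real edge weights. -/
structure WDigraph (V : Type*) where
  /-- the edge relation -/
  E : V → V → Prop
  /-- the edge weights -/
  w : V → V → ℝ
  /-- weights of edges are positive -/
  pos : ∀ a b, E a b → 0 < w a b

namespace WDigraph

variable {V : Type*} [Fintype V] [DecidableEq V]

/-- `p` is a simple path from `s` to `t` in `G`: a nonempty list of pairwise
distinct vertices starting at `s`, ending at `t`, consecutive vertices joined
by edges. (Since all weights are positive, every shortest path is simple, so
it suffices to consider simple paths throughout.) -/
def IsPath (G : WDigraph V) (s t : V) (p : List V) : Prop :=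
  List.Chain' G.E p ∧ p.head? = some s ∧ p.getLast? = some t ∧ p.Nodup

/-- The total weight of a list of vertices (sum of the weights of consecutive pairs). -/
def pw (G : WDigraph V) : List V → ℝ
  | [] => 0
  | [_] => 0
  | a :: b :: r => G.w a b + G.pw (b :: r)

/-- `d(s,t)`: shortest-path distance from `s` to `t`, equal to `⊤` (infinity)
if `t` is unreachable from `s`. -/
noncomputable def dist (G : WDigraph V) (s t : V) : EReal :=
  sInf ((fun p => (G.pw p : EReal)) '' {p | G.IsPath s t p})

/-- The set of shortest `s`-`t` paths in `G`. -/
def SP (G : WDigraph V) (s t : V) : Set (List V) :=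
  {p | G.IsPath s t p ∧ (G.pw p : EReal) = G.dist s t}

/-- `σ_{st}`: the number of shortest `s`-`t` paths in `G`. -/
noncomputable def sigma (G : WDigraph V) (s t : V) : ℕ :=
  (G.SP s t).ncard

/-- `σ_{st}(v)`: the number of shortest `s`-`t` paths in `G` that contain `v`. -/
noncomputable def sigmaV (G : WDigraph V) (s t v : V) : ℕ :=
  {p ∈ G.SP s t | v ∈ p}.ncard

/-- `σ_{st}(v,w)`: the number of shortest `s`-`t` paths in `G` using the edge `(v,w)`. -/
noncomputable def sigmaE (G : WDigraph V) (s t v w : V) : ℕ :=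
  {p ∈ G.SP s t | [v, w] <:+: p}.ncard

/-- `P_s(t)`: the set of predecessors of `t` with respect to source `s`:
nodes `y` with `(y,t) ∈ E` and `d(s,y) + ω(y,t) = d(s,t) < ∞`. -/
def pred (G : WDigraph V) (s t : V) : Set V :=
  {y | G.E y t ∧ G.dist s y + (G.w y t : EReal) = G.dist s t ∧ G.dist s t < ⊤}

/-- `δ_{s•}(v)`: Brandes's one-sided dependency of `s` on `v`
(a summand is `0` whenever its denominator is `0`, which is automatic since
in Lean division by zero yields zero). -/
noncomputable def delta (G : WDigraph V) (s v : V) : ℝ :=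
  ∑ᶠ t ∈ {t : V | t ≠ s ∧ t ≠ v}, (G.sigmaV s t v : ℝ) / (G.sigma s t : ℝ)

/-- `c_B(v)`: the betweenness centrality of `v`. -/
noncomputable def bc (G : WDigraph V) (v : V) : ℝ :=
  ∑ᶠ s ∈ {s : V | s ≠ v}, G.delta s v

/-- `G'` is obtained from `G` by the incremental update `(u, v, ω'(u,v))`:
either a new edge `(u,v) ∉ E` is inserted with positive weight, or the weight
of the existing edge `(u,v)` is decreased; all other edges and weights are
unchanged. (Positivity of all weights is part of the `WDigraph` structure.) -/
structure IsUpdate (G G' : WDigraph V) (u v : V) : Prop where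
  /-- the updated edge is present in `G'` -/
  edge' : G'.E u v
  /-- `E' = E ∪ {(u,v)}` -/
  edge_iff : ∀ a b, G'.E a b ↔ G.E a b ∨ a = u ∧ b = v
  /-- `ω'` agrees with `ω` on all edges other than `(u,v)` -/
  weight_eq : ∀ a b, ¬(a = u ∧ b = v) → G'.w a b = G.w a b
  /-- either an insertion of a new edge, or a weight decrease of an existing one -/
  insert_or_decrease : ¬ G.E u v ∨ (G.E u v ∧ G'.w u v < G.w u v)

/-- `S(t)`: the affected sources of `t`. -/
def affS (G G' : WDigraph V) (t : V) : Set V :=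
  {s | G.dist s t > G'.dist s t ∨ G.sigma s t ≠ G'.sigma s t}

/-- `T(s)`: the affected targets of `s`. -/
def affT (G G' : WDigraph V) (s : V) : Set V :=
  {t | G.dist s t > G'.dist s t ∨ G.sigma s t ≠ G'.sigma s t}

/-- `Δ_{s•}(v) = Σ_{t ∈ T(s), t ≠ v} σ_{st}(v)/σ_{st}`, computed in `G`
(`0`-convention for zero denominators). -/
noncomputable def Delta (G G' : WDigraph V) (s v : V) : ℝ :=
  ∑ᶠ t ∈ {t : V | t ∈ affT G G' s ∧ t ≠ v}, (G.sigmaV s t v : ℝ) / (G.sigma s t : ℝ)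

/-- `Δ'_{s•}(v) = Σ_{t ∈ T(s), t ≠ v} σ'_{st}(v)/σ'_{st}`, computed in `G'`
(`0`-convention for zero denominators). -/
noncomputable def Delta' (G G' : WDigraph V) (s v : V) : ℝ :=
  ∑ᶠ t ∈ {t : V | t ∈ affT G G' s ∧ t ≠ v}, (G'.sigmaV s t v : ℝ) / (G'.sigma s t : ℝ)

end WDigraph

namespace WDigraph

variable {V : Type*} {G : WDigraph V}

lemma pw_nonneg : ∀ {l : List V}, l.IsChain G.E → 0 ≤ G.pw l
  | [], _ | [_], _ => le_rfl
  | a :: b :: r, h => by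
    rw [List.isChain_cons_cons] at h
    simpa only [pw] using add_nonneg (G.pos a b h.1).le (pw_nonneg h.2)

lemma pw_le_pw_append : ∀ {l₁ l₂ : List V}, (l₁ ++ l₂).IsChain G.E → G.pw l₁ ≤ G.pw (l₁ ++ l₂)
  | [], _, h => pw_nonneg h
  | [_], _, h => pw_nonneg h
  | a :: b :: r, l₂, h => by
    rw [List.cons_append, List.cons_append, List.isChain_cons_cons] at h
    simp only [pw, List.cons_append]
    gcongr
    exact pw_le_pw_append h.2

lemma pw_append_singleton : ∀ {l : List V} {y : V}, l.getLast? = some y → ∀ z,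
    G.pw (l ++ [z]) = G.pw l + G.w y z
  | [_], _, h, z => by simp_all [pw]
  | a :: b :: r, y, h, z => by
    rw [List.getLast?_cons_cons] at h
    simp only [List.cons_append, pw]
    rw [add_assoc, ← pw_append_singleton h z]
    rfl

lemma IsPath.append_singleton {s y w : V} {q : List V} (hq : G.IsPath s y q) (hE : G.E y w)
    (hw : w ∉ q) : G.IsPath s w (q ++ [w]) := by
  obtain ⟨hc, hh, hl, hn⟩ := hq
  refine ⟨?_, ?_, by simp, ?_⟩
  · rw [List.Chain', List.isChain_append]
    exact ⟨hc, List.isChain_singleton _, by simp_all⟩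
  · rwa [List.head?_append_of_ne_nil _ (by rintro rfl; simp at hh)]
  · refine List.nodup_append.2 ⟨hn, List.nodup_singleton _, ?_⟩
    simpa using fun a ha (h : a = w) => hw (h ▸ ha)

lemma IsPath.exists_eq_append_singleton {s w : V} {p : List V} (hp : G.IsPath s w p)
    (hws : w ≠ s) : ∃ y q, G.IsPath s y q ∧ G.E y w ∧ p = q ++ [w] := by
  obtain ⟨hc, hh, hl, hn⟩ := hp
  have hp : p.dropLast ++ [w] = p := List.dropLast_append_getLast? w hl
  have hq : p.dropLast ≠ [] := by
    intro h
    rw [← hp, h] at hh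
    exact hws (by simpa using hh)
  rw [← hp] at hc hh hn
  rw [List.Chain', List.isChain_append] at hc
  have hql := List.getLast?_eq_some_getLast hq
  refine ⟨_, _, ⟨hc.1, ?_, hql, hn.sublist (List.sublist_append_left _ _)⟩, hc.2.2 _ hql _ rfl,
    hp.symm⟩
  rwa [List.head?_append_of_ne_nil _ hq] at hh

lemma IsPath.prefix {s t w : V} {a b : List V} (hp : G.IsPath s t (a ++ w :: b)) :
    G.IsPath s w (a ++ [w]) := by
  obtain ⟨hc, hh, -, hn⟩ := hp
  rw [List.append_cons] at hc hh hn
  refine ⟨hc.left_of_append, ?_, by simp, hn.sublist (List.sublist_append_left _ _)⟩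
  rwa [List.head?_append_of_ne_nil _ (by simp)] at hh

lemma dist_le_pw {s t : V} {p : List V} (hp : G.IsPath s t p) : G.dist s t ≤ G.pw p :=
  sInf_le ⟨p, hp, rfl⟩

lemma dist_le_pw_of_mem {s t w : V} {q : List V} (hq : G.IsPath s t q) (hw : w ∈ q) :
    G.dist s w ≤ G.pw q := by
  obtain ⟨a, b, rfl⟩ := List.append_of_mem hw
  refine (dist_le_pw hq.prefix).trans ?_
  rw [List.append_cons a w b] at hq ⊢
  exact_mod_cast pw_le_pw_append hq.1

lemma append_singleton_mem_SP {s y w : V} (hy : y ∈ G.pred s w) {q : List V}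
    (hq : q ∈ G.SP s y) : q ++ [w] ∈ G.SP s w := by
  obtain ⟨hE, hsum, -⟩ := hy
  obtain ⟨hq, hpw⟩ := hq
  have hw : w ∉ q := fun hw => by
    have := (dist_le_pw_of_mem hq hw).trans_lt
      (EReal.coe_lt_coe_iff.2 (lt_add_of_pos_right (G.pw q) (G.pos y w hE)))
    rw [EReal.coe_add, hpw, hsum] at this
    exact this.false
  refine ⟨hq.append_singleton hE hw, ?_⟩
  rw [pw_append_singleton hq.2.2.1, EReal.coe_add, hpw, hsum]

open scoped Function in
lemma pairwise_disjoint_image_append_singleton_SP (s w : V) :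
    Pairwise (Disjoint on fun y => (· ++ [w]) '' G.SP s y) := by
  intro y z hyz
  rw [Function.onFun, Set.disjoint_left]
  rintro _ ⟨q, hq, rfl⟩ ⟨q', hq', heq⟩
  cases List.append_left_injective [w] heq
  exact hyz (Option.some.inj (hq.1.2.2.1.symm.trans hq'.1.2.2.1))

section Finite

variable [Fintype V]

variable (G) in
lemma isPath_finite (s t : V) : {p | G.IsPath s t p}.Finite :=
  (List.finite_length_le V (Fintype.card V)).subset fun _ hp => hp.2.2.2.length_le_card

variable (G) in
lemma SP_finite (s t : V) : (G.SP s t).Finite :=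
  (G.isPath_finite s t).subset fun _ hp => hp.1

lemma exists_mem_SP {s t : V} {p : List V} (hp : G.IsPath s t p) : ∃ q, q ∈ G.SP s t := by
  obtain ⟨q, hq, hmin⟩ := Set.exists_min_image _ G.pw (G.isPath_finite s t) ⟨p, hp⟩
  refine ⟨q, hq, le_antisymm (le_sInf ?_) (dist_le_pw hq)⟩
  rintro _ ⟨r, hr, rfl⟩
  exact EReal.coe_le_coe_iff.2 (hmin r hr)

lemma dist_le_dist_add_w {s y w : V} (hE : G.E y w) : G.dist s w ≤ G.dist s y + G.w y w := by
  rcases em (∃ q, G.IsPath s y q) with ⟨p, hp⟩ | h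
  · obtain ⟨q, hq, hpw⟩ := exists_mem_SP hp
    rw [← hpw]
    by_cases hw : w ∈ q
    · calc G.dist s w ≤ G.pw q := dist_le_pw_of_mem hq hw
        _ ≤ ((G.pw q + G.w y w : ℝ) : EReal) := by
          exact_mod_cast le_add_of_nonneg_right (G.pos y w hE).le
    · rw [← EReal.coe_add, ← pw_append_singleton hq.2.2.1]
      exact dist_le_pw (hq.append_singleton hE hw)
  · have : G.dist s y = ⊤ := by simp [dist, not_exists.mp h]
    simp [this]

lemma exists_pred_of_mem_SP {s w : V} (hws : w ≠ s) {p : List V} (hp : p ∈ G.SP s w) :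
    ∃ y ∈ G.pred s w, ∃ q ∈ G.SP s y, q ++ [w] = p := by
  obtain ⟨hp, hpw⟩ := hp
  obtain ⟨y, q, hq, hE, rfl⟩ := hp.exists_eq_append_singleton hws
  obtain ⟨q', hq', hpw'⟩ := exists_mem_SP hq
  rw [pw_append_singleton hq.2.2.1] at hpw
  have hle : G.pw q ≤ G.pw q' := by
    have := hpw.le.trans (dist_le_dist_add_w (s := s) hE)
    rw [← hpw', ← EReal.coe_add, EReal.coe_le_coe_iff] at this
    linarith
  have hq_short : (G.pw q : EReal) = G.dist s y :=
    le_antisymm (hpw' ▸ EReal.coe_le_coe_iff.2 hle) (dist_le_pw hq)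
  refine ⟨y, ⟨hE, ?_, ?_⟩, q, ⟨hq, hq_short⟩, rfl⟩
  · rw [← hq_short, ← EReal.coe_add, hpw]
  · rw [← hpw]
    exact EReal.coe_lt_top _

lemma SP_eq_biUnion_pred {s w : V} (hws : w ≠ s) :
    G.SP s w = ⋃ y ∈ G.pred s w, (· ++ [w]) '' G.SP s y := by
  ext p
  simp only [Set.mem_iUnion₂, Set.mem_image, exists_prop]
  constructor
  · exact exists_pred_of_mem_SP hws
  · rintro ⟨y, hy, q, hq, rfl⟩
    exact append_singleton_mem_SP hy hq

end Finite

variable [Fintype V] [DecidableEq V]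

theorem sigma_eq_sum_pred_general (G : WDigraph V) (s w : V)
    (hws : w ≠ s) :
    G.sigma s w = ∑ᶠ y ∈ G.pred s w, G.sigma s y := by
  rw [sigma, SP_eq_biUnion_pred hws, (Set.toFinite _).ncard_biUnion
    (fun y _ => (G.SP_finite s y).image _)
    ((pairwise_disjoint_image_append_singleton_SP s w).set_pairwise _)]
  exact finsum_mem_congr rfl fun y _ =>
    Set.ncard_image_of_injective _ (List.append_left_injective [w])

/-- For every `s, w ∈ V` with `w ≠ s` and `d(s,w) < ∞`, the number
of shortest paths satisfies the predecessor recursion `σ_{sw} = Σ_{y ∈ P_s(w)} σ_{sy}`. -/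
theorem sigma_eq_sum_pred (G : WDigraph V) (s w : V)
    (hws : w ≠ s) (hfin : G.dist s w < ⊤) :
    G.sigma s w = ∑ᶠ y ∈ G.pred s w, G.sigma s y :=
  sigma_eq_sum_pred_general G s w hws

end WDigraph
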